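/- Assume that $\mathbf{ex}$ is an initial segment, i.e. $\mathbf{ex}=\{1,\dots,m-r\}$ where $r$ is the number of indices $k\in[1,m]$ with $k^+=m+1$. Define $\delta_\ell=0$ if $\ell\in\mathbf{ex}$ and $\delta_\ell=1$ otherwise, and for $k\in\mathbf{ex}$ set $\mathbf{b}^k_\pm=\sum_{p\in\mathbf{ex}} b_{pk}\varepsilon_p\pm\delta_{k^+}\varepsilon_{k^+}$. Then for each choice of sign, every $k\in\mathbf{ex}$, and every $\ell\in\{1,\dots,m\}$ one has $\Lambda_\mathbf{i}\big(\varphi'_\mathbf{i}(\rho_\mathbf{i}^\pm(\mathbf{b}^k_\pm)),\ \varphi'_\mathbf{i}(\rho_\mathbf{i}^\pm(\varepsilon_\ell))\big)=2\,d_{i_k}\,\delta_{k\ell}$. -/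

import Mathlib

open Finset

/-- The weight lattice `𝒫`: the free abelian group with basis `{αᵢ, ωᵢ : i ∈ I}`,
represented by pairs of coefficient vectors (first component: coefficients of the `αᵢ`,
second component: coefficients of the `ωᵢ`). -/
abbrev PLat (n : ℕ) := (Fin n → ℤ) × (Fin n → ℤ)

/-- The coroot lattice `𝒬^∨`: the free abelian group with basis `{αᵢ^∨ : i ∈ I}`,
represented by coefficient vectors. -/
abbrev QvLat (n : ℕ) := Fin n → ℤ

variable {n : ℕ}

/-- The basis element `α_j^∨` of `𝒬^∨`. -/
def coroot (j : Fin n) : QvLat n := fun k => if k = j then 1 else 0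

/-- The basis element `α_j` of `𝒫`. -/
def alP (j : Fin n) : PLat n := (fun k => if k = j then 1 else 0, 0)

/-- The basis element `ω_j` of `𝒫`. -/
def omP (j : Fin n) : PLat n := (0, fun k => if k = j then 1 else 0)

/-- The biadditive pairing `𝒬^∨ × 𝒫 → ℤ` with `(αᵢ^∨, α_j) = a_{ij}` and
`(αᵢ^∨, ω_j) = δ_{ij}`. -/
def pairQP (A : Fin n → Fin n → ℤ) (x : QvLat n) (lam : PLat n) : ℤ :=
  (∑ a, ∑ b, x a * A a b * lam.1 b) + ∑ a, x a * lam.2 a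

/-- The simple reflection `sᵢ` on `𝒫`: `sᵢ α_j = α_j - a_{ij} αᵢ`,
`sᵢ ω_j = ω_j - δ_{ij} αᵢ`. -/
def sP (A : Fin n → Fin n → ℤ) (a : Fin n) (lam : PLat n) : PLat n :=
  (fun j => if j = a then lam.1 a - ((∑ k, A a k * lam.1 k) + lam.2 a) else lam.1 j,
   lam.2)

/-- The simple reflection `sᵢ^∨` on `𝒬^∨`: `sᵢ^∨ α_j^∨ = α_j^∨ - a_{ji} αᵢ^∨`. -/
def sQ (A : Fin n → Fin n → ℤ) (a : Fin n) (x : QvLat n) : QvLat n :=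
  fun j => if j = a then x a - ∑ k, A k a * x k else x j

/-- `w_ℓ = s_{i₁} ∘ ⋯ ∘ s_{i_ℓ}` on `𝒫` (with `w₀ = id`). -/
def wP (A : Fin n → Fin n → ℤ) (ii : ℕ → Fin n) : ℕ → PLat n → PLat n
  | 0 => id
  | (l+1) => wP A ii l ∘ sP A (ii (l+1))

/-- `w_ℓ^∨ = s_{i₁}^∨ ∘ ⋯ ∘ s_{i_ℓ}^∨` on `𝒬^∨` (with `w₀ = id`). -/
def wQ (A : Fin n → Fin n → ℤ) (ii : ℕ → Fin n) : ℕ → QvLat n → QvLat n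
  | 0 => id
  | (l+1) => wQ A ii l ∘ sQ A (ii (l+1))

/-- `k⁺ = min({ℓ : k < ℓ ≤ m, i_ℓ = i_k} ∪ {m+1})`. -/
noncomputable def kplus (ii : ℕ → Fin n) (m k : ℕ) : ℕ :=
  sInf ({l | k < l ∧ l ≤ m ∧ ii l = ii k} ∪ {m+1})

/-- `k⁻ = max({ℓ : 1 ≤ ℓ < k, i_ℓ = i_k} ∪ {0})`. -/
noncomputable def kminus (ii : ℕ → Fin n) (k : ℕ) : ℕ :=
  sSup ({l | 1 ≤ l ∧ l < k ∧ ii l = ii k} ∪ {0})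

/-- The standard basis vector `ε_k` of `ℤ^m` (1-based index), with the convention
`ε_s = 0` for `s ∉ {1,…,m}`. -/
def eps (m k : ℕ) : Fin m → ℤ := fun j => if (j : ℕ) + 1 = k then 1 else 0

/-- `φ_𝐢(ε_k) = -ε_k - ε_{k⁻} - ∑_{ℓ : ℓ < k < ℓ⁺} a_{i_ℓ i_k} ε_ℓ`. -/
noncomputable def phiE (A : Fin n → Fin n → ℤ) (ii : ℕ → Fin n) (m k : ℕ) :
    Fin m → ℤ :=
  -(eps m k) - eps m (kminus ii k)
    - ∑ l : Fin m, (if (l:ℕ)+1 < k ∧ k < kplus ii m ((l:ℕ)+1)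
        then A (ii ((l:ℕ)+1)) (ii k) else 0) • eps m ((l:ℕ)+1)

/-- The endomorphism `φ_𝐢` of `ℤ^m`, extended additively from its values on the basis. -/
noncomputable def phiMap (A : Fin n → Fin n → ℤ) (ii : ℕ → Fin n) (m : ℕ)
    (v : Fin m → ℤ) : Fin m → ℤ :=
  ∑ k : Fin m, v k • phiE A ii m ((k:ℕ)+1)

/-- `φ'_𝐢(ε_ℓ) = -∑_{k=1}^{ℓ} (w_k^∨ α_{i_k}^∨, w_ℓ ω_{i_ℓ}) ε_k`. -/
def phiE' (A : Fin n → Fin n → ℤ) (ii : ℕ → Fin n) (m l : ℕ) : Fin m → ℤ :=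
  -∑ k : Fin m, (if (k:ℕ)+1 ≤ l then
      pairQP A (wQ A ii ((k:ℕ)+1) (coroot (ii ((k:ℕ)+1)))) (wP A ii l (omP (ii l)))
    else 0) • eps m ((k:ℕ)+1)

/-- The endomorphism `φ'_𝐢` of `ℤ^m`, extended additively from its values on the basis. -/
def phiMap' (A : Fin n → Fin n → ℤ) (ii : ℕ → Fin n) (m : ℕ)
    (v : Fin m → ℤ) : Fin m → ℤ :=
  ∑ l : Fin m, v l • phiE' A ii m ((l:ℕ)+1)

/-- `∂_𝐢 ε_k = ε_k - ε_{k⁻}`. -/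
noncomputable def derE (ii : ℕ → Fin n) (m k : ℕ) : Fin m → ℤ :=
  eps m k - eps m (kminus ii k)

/-- The endomorphism `∂_𝐢` of `ℤ^m`. -/
noncomputable def derMap (ii : ℕ → Fin n) (m : ℕ) (v : Fin m → ℤ) : Fin m → ℤ :=
  ∑ k : Fin m, v k • derE ii m ((k:ℕ)+1)

/-- `∫_𝐢 ε_k = ε_k + ε_{k⁻} + ε_{(k⁻)⁻} + ⋯` (summing along the chain `k > k⁻ > ⋯ > 0`). -/
noncomputable def intE (ii : ℕ → Fin n) (m : ℕ) (k : ℕ) : Fin m → ℤ :=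
  if h : kminus ii k < k then eps m k + intE ii m (kminus ii k) else eps m k
termination_by k
decreasing_by exact h

/-- The endomorphism `∫_𝐢` of `ℤ^m`. -/
noncomputable def intMap (ii : ℕ → Fin n) (m : ℕ) (v : Fin m → ℤ) : Fin m → ℤ :=
  ∑ k : Fin m, v k • intE ii m ((k:ℕ)+1)

/-- The skew-symmetric biadditive form `Λ_𝐢` on `ℤ^m` with
`Λ_𝐢(ε_k, ε_ℓ) = sgn(k-ℓ) c_{i_k i_ℓ}` where `c_{ij} = dᵢ a_{ij}`. -/
def LamF (A : Fin n → Fin n → ℤ) (d : Fin n → ℤ) (ii : ℕ → Fin n) (m : ℕ)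
    (a b : Fin m → ℤ) : ℤ :=
  ∑ k : Fin m, ∑ l : Fin m, a k * b l *
    ((((k:ℕ):ℤ) - ((l:ℕ):ℤ)).sign *
      (d (ii ((k:ℕ)+1)) * A (ii ((k:ℕ)+1)) (ii ((l:ℕ)+1))))

/-- The biadditive form `Φ_𝐢` on `ℤ^m` with `Φ_𝐢(ε_k,ε_ℓ) = -d_{i_k}` if `k = ℓ`,
`= -c_{i_ℓ i_k}` if `ℓ < k`, and `= 0` if `ℓ > k`. -/
def PhiF (A : Fin n → Fin n → ℤ) (d : Fin n → ℤ) (ii : ℕ → Fin n) (m : ℕ)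
    (a b : Fin m → ℤ) : ℤ :=
  ∑ k : Fin m, ∑ l : Fin m, a k * b l *
    (if (k:ℕ) = (l:ℕ) then -(d (ii ((k:ℕ)+1)))
     else if (l:ℕ) < (k:ℕ) then
       -(d (ii ((l:ℕ)+1)) * A (ii ((l:ℕ)+1)) (ii ((k:ℕ)+1)))
     else 0)

/-- The entry `b_{pk}` of the exchange matrix `B̃_𝐢`. -/
noncomputable def bcoef (A : Fin n → Fin n → ℤ) (ii : ℕ → Fin n) (m p k : ℕ) : ℤ :=
  if p = kminus ii k then -1
  else if p < k ∧ k < kplus ii m p ∧ kplus ii m p < kplus ii m k then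
    -(A (ii p) (ii k))
  else if k < p ∧ p < kplus ii m k ∧ kplus ii m k < kplus ii m p then
    A (ii p) (ii k)
  else if p = kplus ii m k then 1
  else 0

/-- The column `𝐛^k = ∑_p b_{pk} ε_p ∈ ℤ^m` of the exchange matrix. -/
noncomputable def bvec (A : Fin n → Fin n → ℤ) (ii : ℕ → Fin n) (m k : ℕ) :
    Fin m → ℤ :=
  fun p => bcoef A ii m ((p:ℕ)+1) k

/-- `ρ_𝐢⁺(ε_k) = ε_k + ∑_{ℓ<k, ℓ⁺=m+1} a_{i_ℓ i_k} ε_ℓ`. -/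
noncomputable def rhoPE (A : Fin n → Fin n → ℤ) (ii : ℕ → Fin n) (m k : ℕ) :
    Fin m → ℤ :=
  eps m k + ∑ l : Fin m, (if (l:ℕ)+1 < k ∧ kplus ii m ((l:ℕ)+1) = m+1
      then A (ii ((l:ℕ)+1)) (ii k) else 0) • eps m ((l:ℕ)+1)

/-- `ρ_𝐢⁻(ε_k) = ε_k - ∑_{ℓ≤k, ℓ⁺=m+1} a_{i_ℓ i_k} ε_ℓ`. -/
noncomputable def rhoME (A : Fin n → Fin n → ℤ) (ii : ℕ → Fin n) (m k : ℕ) :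
    Fin m → ℤ :=
  eps m k - ∑ l : Fin m, (if (l:ℕ)+1 ≤ k ∧ kplus ii m ((l:ℕ)+1) = m+1
      then A (ii ((l:ℕ)+1)) (ii k) else 0) • eps m ((l:ℕ)+1)

/-- The endomorphism `ρ_𝐢⁺` of `ℤ^m`. -/
noncomputable def rhoPMap (A : Fin n → Fin n → ℤ) (ii : ℕ → Fin n) (m : ℕ)
    (v : Fin m → ℤ) : Fin m → ℤ :=
  ∑ k : Fin m, v k • rhoPE A ii m ((k:ℕ)+1)

/-- The endomorphism `ρ_𝐢⁻` of `ℤ^m`. -/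
noncomputable def rhoMMap (A : Fin n → Fin n → ℤ) (ii : ℕ → Fin n) (m : ℕ)
    (v : Fin m → ℤ) : Fin m → ℤ :=
  ∑ k : Fin m, v k • rhoME A ii m ((k:ℕ)+1)

/-- `𝐚_λ = -∑_{k=1}^m (w_k^∨ α_{i_k}^∨, w_m λ) ε_k ∈ ℤ^m`. -/
def avec (A : Fin n → Fin n → ℤ) (ii : ℕ → Fin n) (m : ℕ) (lam : PLat n) :
    Fin m → ℤ :=
  fun k => -(pairQP A (wQ A ii ((k:ℕ)+1) (coroot (ii ((k:ℕ)+1)))) (wP A ii m lam))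

/-- `|𝐚| = ∑_{k=1}^m a_k α_{i_k} ∈ 𝒬 ⊆ 𝒫`. -/
def degP (ii : ℕ → Fin n) (m : ℕ) (a : Fin m → ℤ) : PLat n :=
  (fun j => ∑ k : Fin m, if ii ((k:ℕ)+1) = j then a k else 0, 0)

/-- The pairing `(μ, λ) = ∑ mᵢ dᵢ (αᵢ^∨, λ)` for `μ = ∑ mᵢ αᵢ ∈ 𝒬` and `λ ∈ 𝒫`
(induced by identifying `αᵢ` with `dᵢ αᵢ^∨`). -/
def pairAl (A : Fin n → Fin n → ℤ) (d : Fin n → ℤ) (mu lam : PLat n) : ℤ :=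
  ∑ j, mu.1 j * (d j * pairQP A (coroot j) lam)

/-- `δ_ℓ = 0` if `ℓ ∈ 𝐞𝐱` and `δ_ℓ = 1` otherwise. -/
noncomputable def deltaEx (ii : ℕ → Fin n) (m l : ℕ) : ℤ :=
  if 1 ≤ l ∧ kplus ii m l ≤ m then 0 else 1

/-- The truncation `𝐛^k₊ = ∑_{p ∈ 𝐞𝐱} b_{pk} ε_p + δ_{k⁺} ε_{k⁺}`. -/
noncomputable def bvecP (A : Fin n → Fin n → ℤ) (ii : ℕ → Fin n) (m k : ℕ) :
    Fin m → ℤ :=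
  ((fun p : Fin m => if kplus ii m ((p:ℕ)+1) ≤ m then bcoef A ii m ((p:ℕ)+1) k else 0) : Fin m → ℤ)
    + deltaEx ii m (kplus ii m k) • eps m (kplus ii m k)

/-- The truncation `𝐛^k₋ = ∑_{p ∈ 𝐞𝐱} b_{pk} ε_p - δ_{k⁺} ε_{k⁺}`. -/
noncomputable def bvecM (A : Fin n → Fin n → ℤ) (ii : ℕ → Fin n) (m k : ℕ) :
    Fin m → ℤ :=
  ((fun p : Fin m => if kplus ii m ((p:ℕ)+1) ≤ m then bcoef A ii m ((p:ℕ)+1) k else 0) : Fin m → ℤ)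
    - deltaEx ii m (kplus ii m k) • eps m (kplus ii m k)


/-!
Read `φ_𝐢` and `φ'_𝐢` as matrices. Telescoping `w_t^∨ α_{i_k}^∨` along the word, together
with the invariance `(w^∨ x, w λ) = (x, λ)`, shows that they are mutually inverse. The column
`𝐛^k` is `φ_𝐢(ε_k - ε_{k⁺})`, so `φ'_𝐢(𝐛^k) = ε_k - ε_{k⁺}`; and since `i_{k⁺} = i_k`, the
`k`-th row of `Λ_𝐢` minus its `k⁺`-th row is `2 d_{i_k}` times the `k`-th row of `φ_𝐢`. Hence
`Λ_𝐢(φ'_𝐢 𝐛^k, φ'_𝐢 x) = 2 d_{i_k} x_k`.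

When `𝐞𝐱` is an initial segment, `ρ_𝐢^±` leaves the coordinates in `𝐞𝐱` unchanged and fixes
the vectors supported on `𝐞𝐱`, while `δ_{k⁺} ρ_𝐢⁺(ε_{k⁺})` is exactly the part of `𝐛^k` outside
`𝐞𝐱` (and `ρ_𝐢⁻(ε_j) = -ρ_𝐢⁺(ε_j)` for `j ∉ 𝐞𝐱`, because `a_{ii} = 2`). So
`ρ_𝐢^±(𝐛^k_±) = 𝐛^k` and `ρ_𝐢^±(ε_ℓ)_k = δ_{kℓ}`.
-/

section Occurrences

variable {n : ℕ} (ii : ℕ → Fin n) (m : ℕ)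

lemma kplus_mem (k : ℕ) :
    kplus ii m k ∈ ({l | k < l ∧ l ≤ m ∧ ii l = ii k} ∪ {m + 1} : Set ℕ) :=
  Nat.sInf_mem ⟨m + 1, Or.inr rfl⟩

lemma kplus_le {k l : ℕ} (hkl : k < l) (hlm : l ≤ m) (hl : ii l = ii k) : kplus ii m k ≤ l :=
  Nat.sInf_le (Or.inl ⟨hkl, hlm, hl⟩)

lemma kplus_le_succ (k : ℕ) : kplus ii m k ≤ m + 1 :=
  Nat.sInf_le (Or.inr rfl)

lemma lt_kplus {k : ℕ} (hk : k ≤ m) : k < kplus ii m k := by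
  rcases kplus_mem ii m k with h | h
  · exact h.1
  · rw [Set.mem_singleton_iff.mp h]; omega

lemma kplus_spec {k : ℕ} (h : kplus ii m k ≤ m) :
    k < kplus ii m k ∧ ii (kplus ii m k) = ii k := by
  rcases kplus_mem ii m k with h' | h'
  · exact ⟨h'.1, h'.2.2⟩
  · rw [Set.mem_singleton_iff.mp h'] at h; omega

lemma bddAbove_kminus_set (k : ℕ) :
    BddAbove ({l | 1 ≤ l ∧ l < k ∧ ii l = ii k} ∪ {0} : Set ℕ) :=
  ⟨k, by rintro l (h | h) <;> simp_all; omega⟩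

lemma kminus_mem (k : ℕ) :
    kminus ii k ∈ ({l | 1 ≤ l ∧ l < k ∧ ii l = ii k} ∪ {0} : Set ℕ) :=
  Nat.sSup_mem ⟨0, Or.inr rfl⟩ (bddAbove_kminus_set ii k)

lemma le_kminus {k l : ℕ} (hl : 1 ≤ l) (hlk : l < k) (hii : ii l = ii k) : l ≤ kminus ii k :=
  le_csSup (bddAbove_kminus_set ii k) (Or.inl ⟨hl, hlk, hii⟩)

lemma kminus_lt {k : ℕ} (hk : 1 ≤ k) : kminus ii k < k := by
  rcases kminus_mem ii k with h | h
  · exact h.2.1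
  · rw [Set.mem_singleton_iff.mp h]; omega

lemma kminus_kplus {k : ℕ} (hk : 1 ≤ k) (h : kplus ii m k ≤ m) :
    kminus ii (kplus ii m k) = k := by
  obtain ⟨hlt, hii⟩ := kplus_spec ii m h
  have hle := le_kminus ii hk hlt hii.symm
  rcases kminus_mem ii (kplus ii m k) with ⟨_, hlt', hii'⟩ | h0
  · by_contra hne
    have := kplus_le ii m (lt_of_le_of_ne hle (Ne.symm hne)) (by omega) (hii'.trans hii)
    omega
  · rw [Set.mem_singleton_iff.mp h0] at hle ⊢; omega

lemma kplus_kminus {k : ℕ} (hk : k ≤ m) (h : 1 ≤ kminus ii k) :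
    kplus ii m (kminus ii k) = k := by
  rcases kminus_mem ii k with ⟨_, hlt, hii⟩ | h0
  · have hle := kplus_le ii m hlt hk hii.symm
    by_contra hne
    obtain ⟨hlt', hii'⟩ := kplus_spec ii m (hle.trans hk)
    have := le_kminus ii (by omega) (lt_of_le_of_ne hle hne) (hii'.trans hii)
    omega
  · rw [Set.mem_singleton_iff.mp h0] at h; omega

lemma kplus_eq_iff_kminus_eq {p k : ℕ} (hp : 1 ≤ p) (hk : k ≤ m) :
    kplus ii m p = k ↔ kminus ii k = p := by
  constructor
  · rintro rfl; exact kminus_kplus ii m hp hk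
  · rintro rfl; exact kplus_kminus ii m hk hp

end Occurrences

section WeylGroup

variable {n : ℕ} (A : Fin n → Fin n → ℤ)

/-- `(α_a^∨, λ)`. -/
def corootPair (a : Fin n) (lam : PLat n) : ℤ := (∑ k, A a k * lam.1 k) + lam.2 a

lemma pairQP_eq_sum (x : QvLat n) (lam : PLat n) :
    pairQP A x lam = ∑ j, x j * corootPair A j lam := by
  simp only [pairQP, corootPair, mul_add, sum_add_distrib, mul_sum, mul_assoc]

lemma corootPair_sP (a j : Fin n) (lam : PLat n) :
    corootPair A j (sP A a lam) = corootPair A j lam - A j a * corootPair A a lam := by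
  have h : ∀ k, (sP A a lam).1 k = lam.1 k - if k = a then corootPair A a lam else 0 := by
    intro k; by_cases hk : k = a <;> simp [sP, hk, corootPair]
  simp only [corootPair, h, mul_sub, mul_ite, mul_zero, sum_sub_distrib, sum_ite_eq', mem_univ,
    if_true]
  simp only [sP]
  ring

lemma sQ_eq (a : Fin n) (x : QvLat n) :
    sQ A a x = fun j => x j - if j = a then ∑ k, A k a * x k else 0 := by
  funext j; by_cases hj : j = a <;> simp [sQ, hj]

lemma pairQP_sQ_sP (hA : ∀ i, A i i = 2) (a : Fin n) (x : QvLat n) (lam : PLat n) :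
    pairQP A (sQ A a x) (sP A a lam) = pairQP A x lam := by
  simp only [pairQP_eq_sum, corootPair_sP, sQ_eq, sub_mul, mul_sub, ite_mul, zero_mul,
    sum_sub_distrib, sum_ite_eq', mem_univ, if_true, hA]
  have hX : ∑ j, x j * (A j a * corootPair A a lam)
      = (∑ k, A k a * x k) * corootPair A a lam := by
    rw [sum_mul]; exact sum_congr rfl fun j _ => by ring
  rw [hX]; ring

lemma pairQP_sub_left (x y : QvLat n) (lam : PLat n) :
    pairQP A (x - y) lam = pairQP A x lam - pairQP A y lam := by
  simp only [pairQP_eq_sum, Pi.sub_apply, sub_mul, sum_sub_distrib]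

lemma pairQP_smul_left (c : ℤ) (x : QvLat n) (lam : PLat n) :
    pairQP A (c • x) lam = c * pairQP A x lam := by
  simp only [pairQP_eq_sum, Pi.smul_apply, smul_eq_mul, mul_sum, mul_assoc]

lemma pairQP_coroot_omP (j l : Fin n) :
    pairQP A (coroot j) (omP l) = if j = l then 1 else 0 := by
  simp [pairQP_eq_sum, coroot, corootPair, omP, eq_comm]

lemma sQ_sub (a : Fin n) (x y : QvLat n) : sQ A a (x - y) = sQ A a x - sQ A a y := by
  funext j
  simp only [sQ_eq, Pi.sub_apply, mul_sub, sum_sub_distrib]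
  split_ifs <;> ring

lemma sQ_smul (a : Fin n) (c : ℤ) (x : QvLat n) : sQ A a (c • x) = c • sQ A a x := by
  funext j
  simp only [sQ_eq, Pi.smul_apply, smul_eq_mul, mul_left_comm _ c, ← mul_sum]
  split_ifs <;> ring

lemma sQ_coroot (a j : Fin n) : sQ A a (coroot j) = coroot j - A j a • coroot a := by
  funext p
  by_cases hp : p = a <;> simp [sQ_eq, coroot, hp]

variable (ii : ℕ → Fin n)

lemma wQ_sub (l : ℕ) (x y : QvLat n) : wQ A ii l (x - y) = wQ A ii l x - wQ A ii l y := by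
  induction l generalizing x y with
  | zero => rfl
  | succ l ih => simp only [wQ, Function.comp_apply, sQ_sub, ih]

lemma wQ_smul (l : ℕ) (c : ℤ) (x : QvLat n) : wQ A ii l (c • x) = c • wQ A ii l x := by
  induction l generalizing x with
  | zero => rfl
  | succ l ih => simp only [wQ, Function.comp_apply, sQ_smul, ih]

lemma pairQP_wQ_wP (hA : ∀ i, A i i = 2) (l : ℕ) (x : QvLat n) (lam : PLat n) :
    pairQP A (wQ A ii l x) (wP A ii l lam) = pairQP A x lam := by
  induction l generalizing x lam with
  | zero => rfl
  | succ l ih => simp only [wQ, wP, Function.comp_apply, ih, pairQP_sQ_sP A hA]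

lemma wQ_succ_coroot (s : ℕ) (j : Fin n) :
    wQ A ii (s + 1) (coroot j)
      = wQ A ii s (coroot j) - A j (ii (s + 1)) • wQ A ii s (coroot (ii (s + 1))) := by
  rw [wQ, Function.comp_apply, sQ_coroot, wQ_sub, wQ_smul]

end WeylGroup

lemma sum_fin_succ_eq_sum_Icc (m : ℕ) (f : ℕ → ℤ) :
    ∑ s : Fin m, f (s + 1) = ∑ s ∈ Icc 1 m, f s := by
  rw [Fin.sum_univ_eq_sum_range (fun s => f (s + 1)), range_eq_Ico, sum_Ico_add', zero_add,
    Ico_add_one_right_eq_Icc]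

open scoped Matrix

section PhiMatrices

variable {n : ℕ} (A : Fin n → Fin n → ℤ) (ii : ℕ → Fin n) (m : ℕ)

/-- The coefficient of `ε_k` in `φ_𝐢(ε_s)`; its term `-ε_{s⁻}` is the case `s = k⁺`. -/
noncomputable def phiEntry (k s : ℕ) : ℤ :=
  if s = k ∨ s = kplus ii m k then -1
  else if k < s ∧ s < kplus ii m k then -A (ii k) (ii s) else 0

/-- The coefficient of `ε_s` in `φ'_𝐢(ε_t)`. -/
def phi'Entry (s t : ℕ) : ℤ :=
  if s ≤ t then -pairQP A (wQ A ii s (coroot (ii s))) (wP A ii t (omP (ii t))) else 0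

/-- Telescoping along the word: `w_t^∨ α_{i_k}^∨` is `w_k^∨ α_{i_k}^∨` plus the terms
`a_{i_k i_s} w_s^∨ α_{i_s}^∨` for `k < s ≤ t`, and the term `s = k⁺` cancels it. -/
lemma sum_Icc_phiEntry_mul (hA : ∀ i, A i i = 2) (μ : PLat n) {k t : ℕ} (hkt : k ≤ t)
    (htm : t ≤ m) :
    ∑ s ∈ Icc k t, phiEntry A ii m k s * pairQP A (wQ A ii s (coroot (ii s))) μ
      = if t < kplus ii m k then -pairQP A (wQ A ii t (coroot (ii k))) μ else 0 := by
  induction t, hkt using Nat.le_induction with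
  | base =>
    simp [phiEntry, lt_kplus ii m htm]
  | succ t hkt ih =>
    have hk := lt_kplus ii m (k := k) (by omega)
    have hcoroot : ∀ j, pairQP A (wQ A ii (t + 1) (coroot j)) μ
        = pairQP A (wQ A ii t (coroot j)) μ
          - A j (ii (t + 1)) * pairQP A (wQ A ii t (coroot (ii (t + 1)))) μ := by
      intro j; rw [wQ_succ_coroot, pairQP_sub_left, pairQP_smul_left]
    rw [sum_Icc_succ_top (by omega), ih (by omega), hcoroot, hA]
    rcases lt_trichotomy (t + 1) (kplus ii m k) with hlt | heq | hgt
    · simp only [phiEntry, if_pos hlt, if_pos (show t < kplus ii m k by omega),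
        if_neg (show ¬(t + 1 = k ∨ t + 1 = kplus ii m k) by omega),
        if_pos (show k < t + 1 ∧ t + 1 < kplus ii m k by omega), hcoroot]
      ring
    · have hii := (kplus_spec ii m (k := k) (by omega)).2
      rw [← heq] at hii
      simp only [phiEntry, if_pos (show t < kplus ii m k by omega), if_neg heq.not_lt,
        if_pos (Or.inr heq), hii]
      ring
    · simp only [phiEntry, if_neg (show ¬t < kplus ii m k by omega),
        if_neg (show ¬t + 1 < kplus ii m k by omega),
        if_neg (show ¬(t + 1 = k ∨ t + 1 = kplus ii m k) by omega),
        if_neg (show ¬(k < t + 1 ∧ t + 1 < kplus ii m k) by omega)]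
      ring

lemma phiEntry_of_lt {k s : ℕ} (hk : k ≤ m) (hs : s < k) : phiEntry A ii m k s = 0 := by
  have := lt_kplus ii m hk
  simp only [phiEntry]
  rw [if_neg (by omega), if_neg (by omega)]

lemma phi'Entry_of_lt {s t : ℕ} (h : t < s) : phi'Entry A ii s t = 0 :=
  if_neg (by omega)

lemma sum_phiEntry_mul_phi'Entry (hA : ∀ i, A i i = 2) {k t : ℕ} (hk1 : 1 ≤ k) (hkm : k ≤ m)
    (htm : t ≤ m) :
    ∑ s ∈ Icc 1 m, phiEntry A ii m k s * phi'Entry A ii s t = if k = t then 1 else 0 := by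
  have hvanish : ∀ s, s < k ∨ t < s → phiEntry A ii m k s * phi'Entry A ii s t = 0 := by
    rintro s (hs | hs)
    · rw [phiEntry_of_lt A ii m hkm hs, zero_mul]
    · rw [phi'Entry_of_lt A ii hs, mul_zero]
  rcases lt_or_ge t k with htk | hkt
  · rw [if_neg (by omega)]
    exact sum_eq_zero fun s _ => hvanish s (by omega)
  rw [← sum_subset (Icc_subset_Icc hk1 htm) fun s hs hs' => hvanish s (by simp_all; omega)]
  rw [sum_congr rfl fun s hs => by rw [phi'Entry, if_pos (mem_Icc.mp hs).2, mul_neg],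
    sum_neg_distrib, sum_Icc_phiEntry_mul A ii m hA _ hkt htm, pairQP_wQ_wP A ii hA,
    pairQP_coroot_omP]
  by_cases hlt : t < kplus ii m k
  · rw [if_pos hlt, neg_neg]
    rcases hkt.lt_or_eq with hkt | rfl
    · rw [if_neg hkt.ne, if_neg fun hii => (kplus_le ii m hkt htm hii.symm).not_gt hlt]
    · simp
  · rw [if_neg hlt, neg_zero, if_neg (by have := lt_kplus ii m hkm; omega)]

noncomputable def phiMatrix : Matrix (Fin m) (Fin m) ℤ :=
  Matrix.of fun k s => phiEntry A ii m (k + 1) (s + 1)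

def phi'Matrix : Matrix (Fin m) (Fin m) ℤ :=
  Matrix.of fun s t => phi'Entry A ii (s + 1) (t + 1)

lemma phiMatrix_mul_phi'Matrix (hA : ∀ i, A i i = 2) :
    phiMatrix A ii m * phi'Matrix A ii m = 1 := by
  ext k t
  rw [Matrix.mul_apply, Matrix.one_apply]
  simp only [phiMatrix, phi'Matrix, Matrix.of_apply]
  rw [sum_fin_succ_eq_sum_Icc m fun s => phiEntry A ii m (k + 1) s * phi'Entry A ii s (t + 1),
    sum_phiEntry_mul_phi'Entry A ii m hA (by omega) (by omega) (by omega)]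
  simp [Fin.ext_iff]

lemma phi'Matrix_mul_phiMatrix (hA : ∀ i, A i i = 2) :
    phi'Matrix A ii m * phiMatrix A ii m = 1 :=
  mul_eq_one_comm.mp (phiMatrix_mul_phi'Matrix A ii m hA)

lemma sum_smul_eps (c : Fin m → ℤ) : ∑ k : Fin m, c k • eps m (k + 1) = c := by
  funext j
  simp [eps, Fin.val_inj]

lemma sum_mul_eps_apply (v : Fin m → ℤ) (p : Fin m) :
    ∑ t, v t * eps m ((t : ℕ) + 1) p = v p := by
  simpa using congrFun (sum_smul_eps m v) p

lemma phiMap'_eq_mulVec (v : Fin m → ℤ) : phiMap' A ii m v = phi'Matrix A ii m *ᵥ v := by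
  funext s
  simp only [phiMap', phiE', sum_smul_eps]
  simp [Matrix.mulVec, dotProduct, phi'Matrix, phi'Entry, mul_comm, apply_ite]

end PhiMatrices

section ExchangeColumn

variable {n : ℕ} (A : Fin n → Fin n → ℤ) (ii : ℕ → Fin n) (m : ℕ)

lemma eps_eq_single {j : ℕ} (hj1 : 1 ≤ j) (hjm : j ≤ m) :
    eps m j = Pi.single (⟨j - 1, by omega⟩ : Fin m) 1 := by
  funext p
  simp only [eps, Pi.single_apply, Fin.ext_iff]
  congr 1
  exact propext (by omega)

lemma phiMatrix_mulVec_eps {j : ℕ} (hj1 : 1 ≤ j) (hjm : j ≤ m) :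
    phiMatrix A ii m *ᵥ eps m j = fun p : Fin m => phiEntry A ii m ((p : ℕ) + 1) j := by
  rw [eps_eq_single m hj1 hjm, Matrix.mulVec_single_one]
  funext p
  simp [phiMatrix, Nat.sub_add_cancel hj1]

lemma bcoef_eq_phiEntry_sub {p k : ℕ} (hp1 : 1 ≤ p) (hpm : p ≤ m) (hk1 : 1 ≤ k)
    (hk : kplus ii m k ≤ m) :
    bcoef A ii m p k = phiEntry A ii m p k - phiEntry A ii m p (kplus ii m k) := by
  obtain ⟨hkk, hii⟩ := kplus_spec ii m hk
  have hpp := lt_kplus ii m hpm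
  have hkm := kminus_lt ii hk1
  have hpk : kplus ii m p = k ↔ kminus ii k = p := kplus_eq_iff_kminus_eq ii m hp1 (by omega)
  have hpkk : kplus ii m p = kplus ii m k ↔ k = p := by
    rw [kplus_eq_iff_kminus_eq ii m hp1 hk, kminus_kplus ii m hk1 hk]
  unfold bcoef phiEntry
  rw [hii]
  split_ifs <;> first | ring1 | omega

lemma bvec_eq_phiMatrix_mulVec {k : ℕ} (hk1 : 1 ≤ k) (hk : kplus ii m k ≤ m) :
    bvec A ii m k = phiMatrix A ii m *ᵥ (eps m k - eps m (kplus ii m k)) := by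
  have hkk := (kplus_spec ii m hk).1
  rw [Matrix.mulVec_sub, phiMatrix_mulVec_eps A ii m hk1 (by omega),
    phiMatrix_mulVec_eps A ii m (by omega) hk]
  funext p
  exact bcoef_eq_phiEntry_sub A ii m (by omega) (by omega) hk1 hk

lemma phiMap'_bvec (hA : ∀ i, A i i = 2) {k : ℕ} (hk1 : 1 ≤ k) (hk : kplus ii m k ≤ m) :
    phiMap' A ii m (bvec A ii m k) = eps m k - eps m (kplus ii m k) := by
  rw [phiMap'_eq_mulVec, bvec_eq_phiMatrix_mulVec A ii m hk1 hk, Matrix.mulVec_mulVec,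
    phi'Matrix_mul_phiMatrix A ii m hA, Matrix.one_mulVec]

end ExchangeColumn

section LambdaRow

variable {n : ℕ} (A : Fin n → Fin n → ℤ) (d : Fin n → ℤ) (ii : ℕ → Fin n) (m : ℕ)

lemma sign_natCast_sub (a b : ℕ) :
    ((a : ℤ) - b).sign = if b < a then 1 else if a = b then 0 else -1 := by
  split_ifs with h h'
  · exact Int.sign_eq_one_of_pos (by omega)
  · simp [h']
  · exact Int.sign_eq_neg_one_of_neg (by omega)

lemma lamF_eps_left {k : ℕ} (hk1 : 1 ≤ k) (hkm : k ≤ m) (w : Fin m → ℤ) :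
    LamF A d ii m (eps m k) w
      = ∑ l : Fin m,
          w l * (((k : ℤ) - (l + 1 : ℕ)).sign * (d (ii k) * A (ii k) (ii (l + 1)))) := by
  rw [LamF, eps_eq_single m hk1 hkm, sum_eq_single ⟨k - 1, by omega⟩ (by simp_all) (by simp)]
  simp only [Pi.single_eq_same, one_mul, Nat.sub_add_cancel hk1]
  refine sum_congr rfl fun l _ => ?_
  congr 3
  push_cast [Nat.cast_sub hk1]
  ring

lemma lamF_row_sub (hA : ∀ i, A i i = 2) {k q : ℕ} (hk : kplus ii m k ≤ m) :
    ((k : ℤ) - q).sign * (d (ii k) * A (ii k) (ii q))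
      - ((kplus ii m k : ℤ) - q).sign * (d (ii (kplus ii m k)) * A (ii (kplus ii m k)) (ii q))
      = 2 * d (ii k) * phiEntry A ii m k q := by
  obtain ⟨hkk, hii⟩ := kplus_spec ii m hk
  rw [hii, sign_natCast_sub, sign_natCast_sub, phiEntry]
  split_ifs <;> subst_vars <;> (try simp only [hii, hA]) <;> first | omega | ring

lemma lamF_sub_left (a b w : Fin m → ℤ) :
    LamF A d ii m (a - b) w = LamF A d ii m a w - LamF A d ii m b w := by
  simp only [LamF, Pi.sub_apply, sub_mul, sum_sub_distrib]

lemma lamF_eps_sub_eps_kplus (hA : ∀ i, A i i = 2) (j : Fin m) (hk : kplus ii m (j + 1) ≤ m)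
    (w : Fin m → ℤ) :
    LamF A d ii m (eps m (j + 1) - eps m (kplus ii m (j + 1))) w
      = 2 * d (ii (j + 1)) * (phiMatrix A ii m *ᵥ w) j := by
  have hkk := (kplus_spec ii m hk).1
  rw [lamF_sub_left, lamF_eps_left A d ii m (by omega) j.isLt,
    lamF_eps_left A d ii m (by omega) hk, ← sum_sub_distrib, Matrix.mulVec, dotProduct, mul_sum]
  refine sum_congr rfl fun l _ => ?_
  rw [← mul_sub, lamF_row_sub A d ii m hA hk]
  simp only [phiMatrix, Matrix.of_apply]
  ring

lemma lamF_phiMap'_bvec (hA : ∀ i, A i i = 2) (j : Fin m) (hk : kplus ii m (j + 1) ≤ m)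
    (x : Fin m → ℤ) :
    LamF A d ii m (phiMap' A ii m (bvec A ii m (j + 1))) (phiMap' A ii m x)
      = 2 * d (ii (j + 1)) * x j := by
  rw [phiMap'_bvec A ii m hA (by omega) hk, lamF_eps_sub_eps_kplus A d ii m hA j hk,
    phiMap'_eq_mulVec, Matrix.mulVec_mulVec, phiMatrix_mul_phi'Matrix A ii m hA,
    Matrix.one_mulVec]

end LambdaRow

section Rho

variable {n : ℕ} (A : Fin n → Fin n → ℤ) (ii : ℕ → Fin n) (m : ℕ)

def ExIsInitialSegment : Prop :=
  ∀ p q, 1 ≤ p → p ≤ q → q ≤ m → kplus ii m q ≤ m → kplus ii m p ≤ m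

lemma exIsInitialSegment_of_iff (r : ℕ)
    (hex : ∀ k, 1 ≤ k → k ≤ m → (kplus ii m k ≤ m ↔ k ≤ m - r)) : ExIsInitialSegment ii m :=
  fun p q hp hpq hqm hq =>
    (hex p hp (by omega)).mpr (by have := (hex q (by omega) hqm).mp hq; omega)

/-- The part `∑_{p ∈ 𝐞𝐱} b_{pk} ε_p` shared by `𝐛^k₊` and `𝐛^k₋`. -/
noncomputable def bvecEx (k : ℕ) : Fin m → ℤ :=
  fun p => if kplus ii m ((p : ℕ) + 1) ≤ m then bcoef A ii m ((p : ℕ) + 1) k else 0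

lemma bvecP_eq (k : ℕ) :
    bvecP A ii m k = bvecEx A ii m k + deltaEx ii m (kplus ii m k) • eps m (kplus ii m k) :=
  rfl

lemma bvecM_eq (k : ℕ) :
    bvecM A ii m k = bvecEx A ii m k - deltaEx ii m (kplus ii m k) • eps m (kplus ii m k) :=
  rfl

lemma rhoPE_apply (j : ℕ) (p : Fin m) :
    rhoPE A ii m j p = eps m j p
      + if (p : ℕ) + 1 < j ∧ kplus ii m ((p : ℕ) + 1) = m + 1
        then A (ii ((p : ℕ) + 1)) (ii j) else 0 := by
  rw [rhoPE, Pi.add_apply, sum_smul_eps]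

lemma rhoME_apply (j : ℕ) (p : Fin m) :
    rhoME A ii m j p = eps m j p
      - if (p : ℕ) + 1 ≤ j ∧ kplus ii m ((p : ℕ) + 1) = m + 1
        then A (ii ((p : ℕ) + 1)) (ii j) else 0 := by
  rw [rhoME, Pi.sub_apply, sum_smul_eps]

lemma rhoPMap_eq_linearCombination :
    rhoPMap A ii m = Fintype.linearCombination ℤ fun k : Fin m => rhoPE A ii m ((k : ℕ) + 1) :=
  rfl

lemma rhoMMap_eq_linearCombination :
    rhoMMap A ii m = Fintype.linearCombination ℤ fun k : Fin m => rhoME A ii m ((k : ℕ) + 1) :=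
  rfl

lemma rhoPMap_eps {j : ℕ} (hj1 : 1 ≤ j) (hjm : j ≤ m) :
    rhoPMap A ii m (eps m j) = rhoPE A ii m j := by
  rw [rhoPMap_eq_linearCombination, eps_eq_single m hj1 hjm,
    Fintype.linearCombination_apply_single, one_smul, Nat.sub_add_cancel hj1]

lemma rhoMMap_eps {j : ℕ} (hj1 : 1 ≤ j) (hjm : j ≤ m) :
    rhoMMap A ii m (eps m j) = rhoME A ii m j := by
  rw [rhoMMap_eq_linearCombination, eps_eq_single m hj1 hjm,
    Fintype.linearCombination_apply_single, one_smul, Nat.sub_add_cancel hj1]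

lemma rhoPMap_apply_eq_self {v : Fin m → ℤ} {p : Fin m}
    (hv : kplus ii m ((p : ℕ) + 1) = m + 1 → ∀ t, p < t → v t = 0) :
    rhoPMap A ii m v p = v p := by
  simp only [rhoPMap, Finset.sum_apply, Pi.smul_apply, smul_eq_mul, rhoPE_apply, mul_add,
    sum_add_distrib, sum_mul_eps_apply, add_eq_left]
  refine sum_eq_zero fun t _ => ?_
  split_ifs with h
  · rw [hv h.2 t (by rw [Fin.lt_def]; omega), zero_mul]
  · rw [mul_zero]

lemma rhoMMap_apply_eq_self {v : Fin m → ℤ} {p : Fin m}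
    (hv : kplus ii m ((p : ℕ) + 1) = m + 1 → ∀ t, p ≤ t → v t = 0) :
    rhoMMap A ii m v p = v p := by
  simp only [rhoMMap, Finset.sum_apply, Pi.smul_apply, smul_eq_mul, rhoME_apply, mul_sub,
    sum_sub_distrib, sum_mul_eps_apply, sub_eq_self]
  refine sum_eq_zero fun t _ => ?_
  split_ifs with h
  · rw [hv h.2 t (by rw [Fin.le_def]; omega), zero_mul]
  · rw [mul_zero]

variable {ii m}

lemma rhoPMap_bvecEx (hseg : ExIsInitialSegment ii m) (k : ℕ) :
    rhoPMap A ii m (bvecEx A ii m k) = bvecEx A ii m k :=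
  funext fun p => rhoPMap_apply_eq_self A ii m fun hp t hpt => if_neg fun ht => by
    have := hseg ((p : ℕ) + 1) ((t : ℕ) + 1) (by omega) (by rw [Fin.lt_def] at hpt; omega)
      (by omega) ht
    omega

lemma rhoMMap_bvecEx (hseg : ExIsInitialSegment ii m) (k : ℕ) :
    rhoMMap A ii m (bvecEx A ii m k) = bvecEx A ii m k :=
  funext fun p => rhoMMap_apply_eq_self A ii m fun hp t hpt => if_neg fun ht => by
    have := hseg ((p : ℕ) + 1) ((t : ℕ) + 1) (by omega) (by rw [Fin.le_def] at hpt; omega)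
      (by omega) ht
    omega

lemma rhoME_eq_neg_rhoPE (hA : ∀ i, A i i = 2) {j : ℕ} (hj : kplus ii m j = m + 1) :
    rhoME A ii m j = -rhoPE A ii m j := by
  funext p
  rw [rhoME_apply, Pi.neg_apply, rhoPE_apply]
  by_cases hpj : (p : ℕ) + 1 = j
  · subst hpj
    simp [eps, hj, hA]
  · have hlt : (p : ℕ) + 1 ≤ j ↔ (p : ℕ) + 1 < j := by omega
    simp only [eps, if_neg hpj, hlt]
    ring

lemma deltaEx_smul_rhoME (hA : ∀ i, A i i = 2) {j : ℕ} (hj : 1 ≤ j) :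
    deltaEx ii m j • rhoME A ii m j = -(deltaEx ii m j • rhoPE A ii m j) := by
  unfold deltaEx
  split_ifs with h
  · simp
  · rw [rhoME_eq_neg_rhoPE A hA (by have := kplus_le_succ ii m j; omega), smul_neg]

lemma bcoef_of_frozen {q k : ℕ} (hq : kplus ii m q = m + 1) (hk1 : 1 ≤ k)
    (hk : kplus ii m k ≤ m) (hkq : k < q) :
    bcoef A ii m q k
      = (if q = kplus ii m k then 1 else 0) + if q < kplus ii m k then A (ii q) (ii k) else 0 := by
  have := kminus_lt ii hk1
  unfold bcoef
  split_ifs <;> first | ring1 | omega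

lemma bvecEx_add_deltaEx_smul_rhoPE (hseg : ExIsInitialSegment ii m) {k : ℕ} (hk1 : 1 ≤ k)
    (hk : kplus ii m k ≤ m) :
    bvecEx A ii m k + deltaEx ii m (kplus ii m k) • rhoPE A ii m (kplus ii m k)
      = bvec A ii m k := by
  obtain ⟨hkk, hii⟩ := kplus_spec ii m hk
  funext p
  simp only [Pi.add_apply, Pi.smul_apply, smul_eq_mul, rhoPE_apply, bvecEx, bvec, deltaEx, eps]
  have hpm := p.isLt
  generalize hq_def : (p : ℕ) + 1 = q
  have hq := kplus_le_succ ii m q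
  by_cases hqex : kplus ii m q ≤ m
  · rw [if_pos hqex, if_neg (show ¬(q < kplus ii m k ∧ kplus ii m q = m + 1) by omega)]
    by_cases hqk : q = kplus ii m k
    · subst hqk
      rw [if_pos ⟨by omega, hqex⟩]
      ring
    · rw [if_neg hqk]
      ring
  · have hkq : k < q := by
      by_contra
      exact hqex (hseg q k (by omega) (by omega) (by omega) hk)
    rw [if_neg hqex, bcoef_of_frozen A (by omega) hk1 hk hkq, hii]
    by_cases hkex : kplus ii m (kplus ii m k) ≤ m
    · have : kplus ii m k < q := by
        by_contra
        exact hqex (hseg q (kplus ii m k) (by omega) (by omega) hk hkex)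
      simp only [if_pos (And.intro (by omega : 1 ≤ kplus ii m k) hkex), if_neg this.ne',
        if_neg (by omega : ¬q < kplus ii m k)]
      ring
    · simp only [if_neg (by omega : ¬(1 ≤ kplus ii m k ∧ kplus ii m (kplus ii m k) ≤ m))]
      split_ifs <;> first | ring1 | omega

lemma rhoPMap_bvecP (hseg : ExIsInitialSegment ii m) {k : ℕ} (hk1 : 1 ≤ k)
    (hk : kplus ii m k ≤ m) :
    rhoPMap A ii m (bvecP A ii m k) = bvec A ii m k := by
  have hkk := (kplus_spec ii m hk).1
  rw [bvecP_eq, rhoPMap_eq_linearCombination, map_add, map_smul,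
    ← rhoPMap_eq_linearCombination, rhoPMap_bvecEx A hseg,
    rhoPMap_eps A ii m (by omega) hk, bvecEx_add_deltaEx_smul_rhoPE A hseg hk1 hk]

lemma rhoMMap_bvecM (hA : ∀ i, A i i = 2) (hseg : ExIsInitialSegment ii m) {k : ℕ} (hk1 : 1 ≤ k)
    (hk : kplus ii m k ≤ m) :
    rhoMMap A ii m (bvecM A ii m k) = bvec A ii m k := by
  have hkk := (kplus_spec ii m hk).1
  rw [bvecM_eq, rhoMMap_eq_linearCombination, map_sub, map_smul,
    ← rhoMMap_eq_linearCombination, rhoMMap_bvecEx A hseg,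
    rhoMMap_eps A ii m (by omega) hk, deltaEx_smul_rhoME A hA (by omega), sub_neg_eq_add,
    bvecEx_add_deltaEx_smul_rhoPE A hseg hk1 hk]

end Rho

theorem Lambda_compat_rho_general {n m : ℕ}
    (A : Fin n → Fin n → ℤ) (d : Fin n → ℤ)
    (hA : ∀ i, A i i = 2)
    (ii : ℕ → Fin n)
    (r : ℕ)
    (hex : ∀ k, 1 ≤ k → k ≤ m → (kplus ii m k ≤ m ↔ k ≤ m - r))
    (k : ℕ) (hk1 : 1 ≤ k) (hk2 : kplus ii m k ≤ m)
    (l : ℕ) :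
    LamF A d ii m (phiMap' A ii m (rhoPMap A ii m (bvecP A ii m k)))
        (phiMap' A ii m (rhoPMap A ii m (eps m l))) =
      2 * d (ii k) * (if k = l then 1 else 0) ∧
    LamF A d ii m (phiMap' A ii m (rhoMMap A ii m (bvecM A ii m k)))
        (phiMap' A ii m (rhoMMap A ii m (eps m l))) =
      2 * d (ii k) * (if k = l then 1 else 0) := by
  have hseg := exIsInitialSegment_of_iff ii m r hex
  have hkk := (kplus_spec ii m hk2).1
  obtain ⟨j, rfl⟩ : ∃ j : Fin m, (j : ℕ) + 1 = k := ⟨⟨k - 1, by omega⟩, by simp; omega⟩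
  rw [rhoPMap_bvecP A hseg hk1 hk2, rhoMMap_bvecM A hA hseg hk1 hk2,
    lamF_phiMap'_bvec A d ii m hA j hk2, lamF_phiMap'_bvec A d ii m hA j hk2,
    rhoPMap_apply_eq_self A ii m fun h => absurd h (by omega),
    rhoMMap_apply_eq_self A ii m fun h => absurd h (by omega)]
  exact ⟨rfl, rfl⟩

/-- compatibility for the truncated columns twisted by `ρ_𝐢^±`,
assuming `𝐞𝐱 = {1,…,m-r}` where `r = #{k ∈ [1,m] : k⁺ = m+1}`. -/
theorem Lambda_compat_rho {n m : ℕ} (hm : 1 ≤ m)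
    (A : Fin n → Fin n → ℤ) (d : Fin n → ℤ)
    (hA : ∀ i, A i i = 2) (hd : ∀ i, 0 < d i)
    (hsym : ∀ i j, d i * A i j = d j * A j i)
    (ii : ℕ → Fin n)
    (r : ℕ) (hr : r = Set.ncard {k : ℕ | 1 ≤ k ∧ k ≤ m ∧ kplus ii m k = m + 1})
    (hex : ∀ k, 1 ≤ k → k ≤ m → (kplus ii m k ≤ m ↔ k ≤ m - r))
    (k : ℕ) (hk1 : 1 ≤ k) (hk2 : kplus ii m k ≤ m)
    (l : ℕ) (hl1 : 1 ≤ l) (hl2 : l ≤ m) :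
    LamF A d ii m (phiMap' A ii m (rhoPMap A ii m (bvecP A ii m k)))
        (phiMap' A ii m (rhoPMap A ii m (eps m l))) =
      2 * d (ii k) * (if k = l then 1 else 0) ∧
    LamF A d ii m (phiMap' A ii m (rhoMMap A ii m (bvecM A ii m k)))
        (phiMap' A ii m (rhoMMap A ii m (eps m l))) =
      2 * d (ii k) * (if k = l then 1 else 0) :=
  Lambda_compat_rho_general A d hA ii r hex k hk1 hk2 l
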